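/- Let G satisfy |B(x,r)| ≤ c_u r^{d_u} and the isoperimetric inequality |∂A| ≥ c_i |A|^{(d_i−1)/d_i} with d_i > 1. Fix J ≥ 1, γ with γ(d_i−1)/d_i > 2d_u, C ≥ 1, v ≥ 1, and scales L_{k+1} = L_k^γ, L₀ = 10000. Then there is k* such that for all k ≥ k*: for any x ∈ V, any points z₁,…,z_n ∈ B(x, L_{k+1}²) with n ≤ J log²(L_k), and any set A ⊆ B(x, 3L_{k+1}) with |A| ≥ L_{k+1}/(100v), there exists a path from A to ∂_i B(x, 2L_{k+1}²) avoiding ∪_{i≤n} B(z_i, 20 C L_k²). -/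

import Mathlib

/-- The closed ball of (real) radius `r` around `x` in the graph metric. -/
def gball {V : Type*} (G : SimpleGraph V) (x : V) (r : ℝ) : Set V :=
  {y : V | (G.dist x y : ℝ) ≤ r}

/-- The edge boundary of a vertex set `A`. -/
def edgeBoundary {V : Type*} (G : SimpleGraph V) (A : Set V) : Set (Sym2 V) :=
  {e : Sym2 V | ∃ u v : V, e = s(u, v) ∧ G.Adj u v ∧ u ∈ A ∧ v ∉ A}

open Filter Asymptotics

set_option maxHeartbeats 1000000

lemma aux_asymp (p q A B : ℝ) (hpq : p < q) (hA : 0 < A) (hB : 0 < B) :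
    ∃ T : ℝ, 1 ≤ T ∧ ∀ t : ℝ, T ≤ t → A * (Real.log t) ^ 2 * t ^ p < B * t ^ q := by
  have h2 : (fun t : ℝ => (Real.log t) ^ 2) =o[atTop] (fun t : ℝ => t ^ (q - p)) := by
    have := isLittleO_log_rpow_rpow_atTop ((2 : ℕ) : ℝ) (sub_pos.2 hpq)
    simpa [Real.rpow_natCast] using this
  have h3 : (fun t : ℝ => (Real.log t) ^ 2 * t ^ p) =o[atTop]
      (fun t : ℝ => t ^ (q - p) * t ^ p) :=
    h2.mul_isBigO (isBigO_refl _ _)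
  have heq : (fun t : ℝ => t ^ (q - p) * t ^ p) =ᶠ[atTop] (fun t : ℝ => t ^ q) := by
    filter_upwards [eventually_gt_atTop (0 : ℝ)] with t ht
    rw [← Real.rpow_add ht, sub_add_cancel]
  have h4 : (fun t : ℝ => (Real.log t) ^ 2 * t ^ p) =o[atTop] (fun t : ℝ => t ^ q) :=
    h3.trans_eventuallyEq heq
  have h5 := h4.def (show (0 : ℝ) < B / (2 * A) by positivity)
  obtain ⟨T, hT⟩ := (h5.and (eventually_ge_atTop (1 : ℝ))).exists_forall_of_atTop
  refine ⟨max T 1, le_max_right _ _, fun t ht => ?_⟩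
  obtain ⟨h6, h7⟩ := hT t (le_trans (le_max_left _ _) ht)
  have ht1 : (1 : ℝ) ≤ t := le_trans (le_max_right _ _) ht
  have ht0 : (0 : ℝ) < t := lt_of_lt_of_le one_pos ht1
  have hlog : 0 ≤ Real.log t := Real.log_nonneg ht1
  have hq : 0 < t ^ q := Real.rpow_pos_of_pos ht0 _
  have hp : 0 < t ^ p := Real.rpow_pos_of_pos ht0 _
  rw [Real.norm_eq_abs, Real.norm_eq_abs, abs_of_nonneg (by positivity),
    abs_of_nonneg hq.le] at h6
  have : A * ((Real.log t) ^ 2 * t ^ p) ≤ A * (B / (2 * A) * t ^ q) :=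
    mul_le_mul_of_nonneg_left h6 hA.le
  calc A * (Real.log t) ^ 2 * t ^ p = A * ((Real.log t) ^ 2 * t ^ p) := by ring
    _ ≤ A * (B / (2 * A) * t ^ q) := this
    _ = (B / 2) * t ^ q := by field_simp
    _ < B * t ^ q := by nlinarith

lemma walk_cross {V : Type*} (G : SimpleGraph V) (P : Set V) :
    ∀ {a y : V} (τ : G.Walk a y), a ∈ P → y ∉ P →
    ∃ (w : V) (σ : G.Walk a w), w ∈ P ∧ (∃ u, G.Adj w u ∧ u ∉ P) ∧
      ∀ s ∈ σ.support, s ∈ τ.support := by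
  intro a y τ
  induction τ with
  | nil => intro h1 h2; exact absurd h1 h2
  | @cons a b y h q ih =>
    intro ha hy
    by_cases hb : b ∈ P
    · obtain ⟨w, σ, h1, h2, h3⟩ := ih hb hy
      refine ⟨w, .cons h σ, h1, h2, ?_⟩
      intro s hs
      rw [SimpleGraph.Walk.support_cons] at hs ⊢
      rcases List.mem_cons.1 hs with h' | h'
      · exact List.mem_cons.2 (Or.inl h')
      · exact List.mem_cons.2 (Or.inr (h3 s h'))
    · exact ⟨a, .nil, ha, ⟨b, h, hb⟩, by simp⟩


/-- under polynomial growth, the isoperimetric inequality with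
`d_i > 1` and `γ(d_i-1)/d_i > 2d_u`, for all large scales `k` any large set
`A ⊆ B(x, 3L_{k+1})` is joined to `∂_i B(x, 2L_{k+1}²)` by a path avoiding any
prescribed `n ≤ J log² L_k` balls of radius `20 C L_k²`. -/
theorem stmt15 {V : Type*} [Infinite V] (G : SimpleGraph V) (hG : G.Connected)
    (c_u d_u c_i d_i : ℝ) (hcu : 0 < c_u) (hdu : 0 < d_u) (hci : 0 < c_i) (hdi : 1 < d_i)
    (hvol : ∀ (x : V) (r : ℝ), 1 ≤ r →
      (gball G x r).Finite ∧ ((gball G x r).ncard : ℝ) ≤ c_u * r ^ d_u)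
    (hiso : ∀ A : Set V, A.Finite →
      c_i * (A.ncard : ℝ) ^ ((d_i - 1) / d_i) ≤ ((edgeBoundary G A).ncard : ℝ))
    (J : ℕ) (hJ : 1 ≤ J) (γ : ℝ) (hγ2 : 2 ≤ γ)
    (hγ : 2 * d_u < γ * ((d_i - 1) / d_i))
    (C v : ℝ) (hC : 1 ≤ C) (hv : 1 ≤ v) :
    ∃ kstar : ℕ, ∀ L : ℕ → ℝ, L 0 = 10000 → (∀ k, L (k + 1) = L k ^ γ) →
      ∀ k : ℕ, kstar ≤ k → ∀ x : V,
      ∀ n : ℕ, (n : ℝ) ≤ (J : ℝ) * (Real.log (L k)) ^ 2 →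
      ∀ z : Fin n → V, (∀ i, z i ∈ gball G x ((L (k + 1)) ^ 2)) →
      ∀ A : Set V, A.Finite → (∀ a ∈ A, a ∈ gball G x (3 * L (k + 1))) →
        L (k + 1) / (100 * v) ≤ (A.ncard : ℝ) →
        ∃ (a w : V) (τ : G.Walk a w), a ∈ A ∧
          (w ∈ gball G x (2 * (L (k + 1)) ^ 2) ∧
            ∃ u : V, G.Adj w u ∧ u ∉ gball G x (2 * (L (k + 1)) ^ 2)) ∧
          ∀ y ∈ τ.support, ∀ i : Fin n, y ∉ gball G (z i) (20 * C * (L k) ^ 2) := by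
  classical
  have hdi0 : (0 : ℝ) < d_i := lt_trans one_pos hdi
  set α : ℝ := (d_i - 1) / d_i with hα_def
  have hα0 : 0 < α := div_pos (by linarith) hdi0
  have hα1 : α < 1 := (div_lt_one hdi0).2 (by linarith)
  have hγ0 : (0 : ℝ) < γ := by linarith
  have hγdu : 2 * d_u < γ := by nlinarith
  have h20C : (0 : ℝ) < (20 * C) ^ d_u := Real.rpow_pos_of_pos (by linarith) _
  set K : ℝ := (J : ℝ) * c_u * (20 * C) ^ d_u with hK_def
  have hK0 : 0 < K := by
    have : (1 : ℝ) ≤ (J : ℝ) := by exact_mod_cast hJ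
    positivity
  have hv0 : (0 : ℝ) < v := by linarith
  have h200v : (0 : ℝ) < (200 * v) ^ α := Real.rpow_pos_of_pos (by linarith) _
  obtain ⟨T₁, hT₁1, hT₁⟩ := aux_asymp (2 * d_u) γ K (1 / (200 * v)) hγdu hK0 (by positivity)
  obtain ⟨T₂, hT₂1, hT₂⟩ := aux_asymp (2 * d_u) (γ * α) (c_u * K) (c_i / (200 * v) ^ α)
    hγ (by positivity) (by positivity)
  obtain ⟨kstar, hkstar⟩ : ∃ m : ℕ, max T₁ T₂ ≤ (m : ℝ) := exists_nat_ge _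
  refine ⟨kstar, ?_⟩
  intro L hL0 hLrec k hkk x n hn z hz A hAfin hAsub hAcard
  -- growth of L
  have hLlb : ∀ m : ℕ, (10000 : ℝ) * m + 10000 ≤ L m := by
    intro m
    induction m with
    | zero => simp [hL0]
    | succ m ih =>
      have h1 : (10000 : ℝ) ≤ L m := by push_cast at ih ⊢; nlinarith [Nat.cast_nonneg (α := ℝ) m]
      have h2 : L m ^ (2 : ℝ) ≤ L m ^ γ :=
        Real.rpow_le_rpow_of_exponent_le (by linarith) hγ2
      have h3 : L m ^ (2 : ℝ) = L m * L m := by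
        rw [show (2 : ℝ) = ((2 : ℕ) : ℝ) by norm_num, Real.rpow_natCast]; ring
      have h5 : L m + L m ≤ L m * L m := by nlinarith
      have h6 : L m * L m ≤ L m ^ γ := h3 ▸ h2
      rw [hLrec m]
      push_cast at ih ⊢
      linarith only [ih, h1, h5, h6]
  have hL1 : ∀ m : ℕ, (1 : ℝ) ≤ L m := by
    intro m; have := hLlb m; nlinarith [Nat.cast_nonneg (α := ℝ) m]
  have hℓ4 : (10000 : ℝ) ≤ L k := by
    have := hLlb k; nlinarith [Nat.cast_nonneg (α := ℝ) k]
  have hℓT : max T₁ T₂ ≤ L k := by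
    have h1 : (kstar : ℝ) ≤ (k : ℝ) := by exact_mod_cast hkk
    have := hLlb k
    calc max T₁ T₂ ≤ (kstar : ℝ) := hkstar
      _ ≤ 10000 * (k : ℝ) + 10000 := by nlinarith [Nat.cast_nonneg (α := ℝ) kstar]
      _ ≤ L k := this
  have hL'4 : (10000 : ℝ) ≤ L (k + 1) := by
    have := hLlb (k + 1); nlinarith [Nat.cast_nonneg (α := ℝ) (k + 1)]
  set ℓ : ℝ := L k with hℓ_def
  set L' : ℝ := L (k + 1) with hL'_def
  have hL'eq : L' = ℓ ^ γ := hLrec k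
  set R : ℝ := 20 * C * ℓ ^ 2 with hR_def
  have hR1 : (1 : ℝ) ≤ R := by nlinarith
  set S : Set V := ⋃ i : Fin n, gball G (z i) R with hS_def
  have hSfin : S.Finite := Set.finite_iUnion (fun i => (hvol (z i) R hR1).1)
  -- bound on |S|
  have hRdu : R ^ d_u = (20 * C) ^ d_u * ℓ ^ (2 * d_u) := by
    have hℓ0 : (0 : ℝ) ≤ ℓ := by linarith
    rw [hR_def, Real.mul_rpow (by linarith) (by positivity)]
    congr 1
    rw [show ℓ ^ 2 = ℓ ^ ((2 : ℕ) : ℝ) by rw [Real.rpow_natCast],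
      ← Real.rpow_mul hℓ0]
    norm_num
  set M : ℝ := K * (Real.log ℓ) ^ 2 * ℓ ^ (2 * d_u) with hM_def
  have hScard : (S.ncard : ℝ) ≤ M := by
    have hsub : hSfin.toFinset ⊆
        Finset.univ.biUnion (fun i : Fin n => (hvol (z i) R hR1).1.toFinset) := by
      intro e he
      rw [Set.Finite.mem_toFinset] at he
      rcases Set.mem_iUnion.1 he with ⟨i, hi⟩
      exact Finset.mem_biUnion.2 ⟨i, Finset.mem_univ _, (Set.Finite.mem_toFinset _).2 hi⟩
    have h1 : (S.ncard : ℝ) ≤ (n : ℝ) * (c_u * R ^ d_u) := by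
      have h2 := le_trans (Finset.card_le_card hsub) (Finset.card_biUnion_le)
      rw [Set.ncard_eq_toFinset_card S hSfin]
      calc ((hSfin.toFinset.card : ℕ) : ℝ)
          ≤ ((∑ i : Fin n, ((hvol (z i) R hR1).1.toFinset.card) : ℕ) : ℝ) := by
            exact_mod_cast h2
        _ = ∑ i : Fin n, (((hvol (z i) R hR1).1.toFinset.card : ℕ) : ℝ) := by push_cast; rfl
        _ ≤ ∑ i : Fin n, (c_u * R ^ d_u) := by
            refine Finset.sum_le_sum fun i _ => ?_
            rw [← Set.ncard_eq_toFinset_card _ (hvol (z i) R hR1).1]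
            exact (hvol (z i) R hR1).2
        _ = (n : ℝ) * (c_u * R ^ d_u) := by
            rw [Finset.sum_const, Finset.card_univ, Fintype.card_fin, nsmul_eq_mul]
    have hRpos : (0 : ℝ) ≤ c_u * R ^ d_u := by positivity
    have hlogpos : (0 : ℝ) ≤ (J : ℝ) * (Real.log ℓ) ^ 2 := by positivity
    calc (S.ncard : ℝ) ≤ (n : ℝ) * (c_u * R ^ d_u) := h1
      _ ≤ ((J : ℝ) * (Real.log ℓ) ^ 2) * (c_u * R ^ d_u) :=
          mul_le_mul_of_nonneg_right hn hRpos
      _ = M := by rw [hM_def, hK_def, hRdu]; ring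
  -- the big ball
  have hBigr : (1 : ℝ) ≤ 2 * L' ^ 2 := by nlinarith
  have hBigfin : (gball G x (2 * L' ^ 2)).Finite := (hvol x _ hBigr).1
  set Big : Set V := gball G x (2 * L' ^ 2) with hBig_def
  set U : Set V := {y : V | ∃ a ∈ A, ∃ τ : G.Walk a y, ∀ s ∈ τ.support, s ∉ S} with hU_def
  by_cases hcase : ∃ y ∈ U, y ∉ Big
  · obtain ⟨y, hyU, hyB⟩ := hcase
    obtain ⟨a, haA, τ, hτ⟩ := hyU
    have haBig : a ∈ Big := by
      have h1 : (G.dist x a : ℝ) ≤ 3 * L' := hAsub a haA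
      show (G.dist x a : ℝ) ≤ 2 * L' ^ 2
      nlinarith
    obtain ⟨w, σ, hw, hu, hsub⟩ := walk_cross G Big τ haBig hyB
    refine ⟨a, w, σ, haA, ⟨hw, hu⟩, ?_⟩
    intro y' hy' i hmem
    exact hτ y' (hsub y' hy') (Set.mem_iUnion.2 ⟨i, hmem⟩)
  · push_neg at hcase
    exfalso
    have hUfin : U.Finite := hBigfin.subset (fun y hy => hcase y hy)
    have hUS : ∀ y ∈ U, y ∉ S := by
      rintro y ⟨a, ha, τ, hτ⟩
      exact hτ y τ.end_mem_support
    have hAU : A \ S ⊆ U := by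
      rintro a ⟨ha, haS⟩
      exact ⟨a, ha, SimpleGraph.Walk.nil, by simpa using haS⟩
    have hbd : ∀ e ∈ edgeBoundary G U, ∃ p : V × V,
        e = s(p.1, p.2) ∧ G.Adj p.1 p.2 ∧ p.1 ∈ U ∧ p.2 ∈ S := by
      rintro e ⟨u', v', he, hadj, huU, hvU⟩
      refine ⟨(u', v'), he, hadj, huU, ?_⟩
      by_contra hvS
      apply hvU
      obtain ⟨a, ha, τ, hτ⟩ := huU
      refine ⟨a, ha, τ.concat hadj, ?_⟩
      intro s hs
      rw [SimpleGraph.Walk.support_concat, List.mem_append] at hs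
      rcases hs with h' | h'
      · exact hτ s h'
      · rw [List.mem_singleton] at h'; subst h'; exact hvS
    have hT'fin : (⋃ i : Fin n, gball G (z i) (R + 1)).Finite :=
      Set.finite_iUnion (fun i => (hvol (z i) (R + 1) (by linarith)).1)
    have hEfin : (edgeBoundary G U).Finite := by
      refine ((hT'fin.prod hT'fin).image (fun p : V × V => s(p.1, p.2))).subset ?_
      rintro e he
      obtain ⟨p, hep, hadj, hpU, hpS⟩ := hbd e he
      rcases Set.mem_iUnion.1 hpS with ⟨i, hi⟩
      have hiR : (G.dist (z i) p.2 : ℝ) ≤ R := hi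
      have hd1 : (G.dist (z i) p.1 : ℝ) ≤ R + 1 := by
        have htri := hG.dist_triangle (u := z i) (v := p.2) (w := p.1)
        have hone : G.dist p.2 p.1 = 1 := SimpleGraph.dist_eq_one_iff_adj.2 hadj.symm
        rw [hone] at htri
        have hcast : (G.dist (z i) p.1 : ℝ) ≤ (G.dist (z i) p.2 : ℝ) + 1 := by
          exact_mod_cast htri
        linarith
      refine ⟨p, Set.mk_mem_prod (Set.mem_iUnion.2 ⟨i, hd1⟩)
        (Set.mem_iUnion.2 ⟨i, by exact le_trans hiR (by linarith)⟩), hep.symm⟩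
    -- choice function picking, for each boundary edge, its endpoints
    let f : Sym2 V → V × V := fun e =>
      if h : e ∈ edgeBoundary G U then (hbd e h).choose
      else (Classical.arbitrary V, Classical.arbitrary V)
    have hf : ∀ e (h : e ∈ edgeBoundary G U), e = s((f e).1, (f e).2) ∧
        G.Adj (f e).1 (f e).2 ∧ (f e).1 ∈ U ∧ (f e).2 ∈ S := by
      intro e h
      simp only [f, dif_pos h]
      exact (hbd e h).choose_spec
    -- counting boundary edges fiberwise over S
    have hEcard : ((edgeBoundary G U).ncard : ℝ) ≤ (S.ncard : ℝ) * c_u := by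
      have hmap : ∀ e ∈ hEfin.toFinset, (f e).2 ∈ hSfin.toFinset := by
        intro e he
        rw [Set.Finite.mem_toFinset] at he ⊢
        exact (hf e he).2.2.2
      have hsum := Finset.card_eq_sum_card_fiberwise hmap
      have hfiber : ∀ w' ∈ hSfin.toFinset,
          (((hEfin.toFinset.filter (fun e => (f e).2 = w')).card : ℕ) : ℝ) ≤ c_u := by
        intro w' hw'
        have hballfin := (hvol w' 1 le_rfl).1
        have hle : (hEfin.toFinset.filter (fun e => (f e).2 = w')).card ≤
            hballfin.toFinset.card := by
          refine Finset.card_le_card_of_injOn (fun e => (f e).1) ?_ ?_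
          · intro e he
            rw [Finset.mem_coe, Finset.mem_filter, Set.Finite.mem_toFinset] at he
            obtain ⟨heE, hew⟩ := he
            rw [Finset.mem_coe, Set.Finite.mem_toFinset]
            have hadj : G.Adj w' (f e).1 := by
              have := (hf e heE).2.1
              rw [hew] at this
              exact this.symm
            show (G.dist w' (f e).1 : ℝ) ≤ 1
            rw [SimpleGraph.dist_eq_one_iff_adj.2 hadj]
            norm_num
          · intro e he e' he' hee
            simp only [Finset.coe_filter, Set.mem_setOf_eq, Set.Finite.mem_toFinset] at he he'
            have hee' : (f e).1 = (f e').1 := hee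
            have h1 := (hf e he.1).1
            have h2 := (hf e' he'.1).1
            rw [h1, h2, hee', he.2, he'.2]
        have h2 : ((gball G w' 1).ncard : ℝ) ≤ c_u := by
          have := (hvol w' 1 le_rfl).2
          rwa [Real.one_rpow, mul_one] at this
        rw [Set.ncard_eq_toFinset_card _ hballfin] at h2
        exact le_trans (by exact_mod_cast hle) h2
      have hfin : ((hEfin.toFinset.card : ℕ) : ℝ) ≤ (hSfin.toFinset.card : ℕ) * c_u := by
        rw [hsum]
        push_cast
        calc (∑ w' ∈ hSfin.toFinset,
              ((hEfin.toFinset.filter (fun e => (f e).2 = w')).card : ℝ))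
            ≤ ∑ w' ∈ hSfin.toFinset, c_u := Finset.sum_le_sum hfiber
          _ = (hSfin.toFinset.card : ℕ) * c_u := by
              rw [Finset.sum_const, nsmul_eq_mul]
      rwa [Set.ncard_eq_toFinset_card _ hEfin, Set.ncard_eq_toFinset_card _ hSfin]
    -- isoperimetry gives the contradiction
    have hiso' := hiso U hUfin
    have hANS : (A.ncard : ℝ) ≤ ((A \ S).ncard : ℝ) + (S.ncard : ℝ) := by
      have h1 : A ⊆ (A \ S) ∪ S := fun a ha => by
        by_cases h : a ∈ S
        · exact Or.inr h
        · exact Or.inl ⟨ha, h⟩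
      have h2 : A.ncard ≤ ((A \ S) ∪ S).ncard :=
        Set.ncard_le_ncard h1 (hAfin.diff.union hSfin)
      have h3 := Set.ncard_union_le (A \ S) S
      exact_mod_cast le_trans h2 h3
    have hUcard : ((A \ S).ncard : ℝ) ≤ (U.ncard : ℝ) := by
      exact_mod_cast Set.ncard_le_ncard hAU hUfin
    have hM : M < 1 / (200 * v) * ℓ ^ γ := hT₁ ℓ (le_trans (le_max_left _ _) hℓT)
    have hAbig : ℓ ^ γ / (100 * v) ≤ (A.ncard : ℝ) := by rw [← hL'eq]; exact hAcard
    have hv' : (v : ℝ) ≠ 0 := ne_of_gt hv0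
    have hUlow : ℓ ^ γ / (200 * v) ≤ (U.ncard : ℝ) := by
      have hkey : ℓ ^ γ / (100 * v) - 1 / (200 * v) * ℓ ^ γ = ℓ ^ γ / (200 * v) := by
        field_simp
        ring
      linarith
    have hℓ0 : (0 : ℝ) < ℓ := by linarith
    have hpow : c_i / (200 * v) ^ α * ℓ ^ (γ * α) ≤ c_i * (U.ncard : ℝ) ^ α := by
      have h1 : (ℓ ^ γ / (200 * v)) ^ α ≤ ((U.ncard : ℝ)) ^ α :=
        Real.rpow_le_rpow (by positivity) hUlow hα0.le
      have h2 : (ℓ ^ γ / (200 * v)) ^ α = ℓ ^ (γ * α) / (200 * v) ^ α := by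
        rw [Real.div_rpow (by positivity) (by linarith), ← Real.rpow_mul hℓ0.le]
      calc c_i / (200 * v) ^ α * ℓ ^ (γ * α) = c_i * (ℓ ^ γ / (200 * v)) ^ α := by
            rw [h2]; ring
        _ ≤ c_i * ((U.ncard : ℝ)) ^ α := mul_le_mul_of_nonneg_left h1 hci.le
    have hB := hT₂ ℓ (le_trans (le_max_right _ _) hℓT)
    have hSM : (S.ncard : ℝ) * c_u ≤ M * c_u := mul_le_mul_of_nonneg_right hScard hcu.le
    have hMc : M * c_u = c_u * K * Real.log ℓ ^ 2 * ℓ ^ (2 * d_u) := by rw [hM_def]; ring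
    linarith
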